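/- arXiv:2605.21717 — 4 statements merged into one kernel-verified Lean document; each statement's English description precedes it below -/
import Mathlib

section
/- Let π be a positive, integrable joint probability density of the variables (x_r, x_⊥, y_s, y_⊥), with all marginal and conditional densities positive, and write x = (x_r, x_⊥), y = (y_s, y_⊥). Then for every y with π(y) > 0, assuming the integral exists, ∫ π(x | y) i(x_⊥; y_⊥ | x_r, y_s) dx ≥ 0; indeed this integral equals ∫ π(x_r | y) D_KL( π(· | x_r, y) ‖ π(· | x_r, y_s) ) dx_r, an expectation of Kullback–Leibler divergences between conditional densities of x_⊥, and hence is nonnegative. -/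
open MeasureTheory

/-!
Since `π(x_r, x_⊥ | y_s) = π(x_⊥ | x_r, y_s) π(x_r | y_s)` and likewise with `y` in place of `y_s`,
the pointwise mutual information `i(x_⊥; y_⊥ | x_r, y_s)` equals
`log (π(x_⊥ | x_r, y) / π(x_⊥ | x_r, y_s))`, while `π(x | y) = π(x_r | y) π(x_⊥ | x_r, y)`.
Integrating over `x_⊥` first therefore produces, for each `x_r`, a Kullback–Leibler divergence
between two probability densities, which is nonnegative by Gibbs' inequality
`x - y ≤ x log (x / y)`.
-/

lemma sub_le_mul_log_div {x y : ℝ} (hx : 0 < x) (hy : 0 < y) : x - y ≤ x * Real.log (x / y) := by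
  have h := mul_le_mul_of_nonneg_left (Real.one_sub_inv_le_log_of_pos (div_pos hx hy)) hx.le
  rwa [inv_div, mul_sub, mul_one, mul_div_cancel₀ _ hx.ne'] at h

lemma integral_mul_log_div_nonneg {α : Type*} [MeasurableSpace α] {μ : Measure α}
    {f g : α → ℝ} (hf : ∀ᵐ x ∂μ, 0 < f x) (hg : ∀ᵐ x ∂μ, 0 < g x)
    (hfi : Integrable f μ) (hgi : Integrable g μ) (hgf : ∫ x, g x ∂μ ≤ ∫ x, f x ∂μ)
    (hfgi : Integrable (fun x ↦ f x * Real.log (f x / g x)) μ) :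
    0 ≤ ∫ x, f x * Real.log (f x / g x) ∂μ := by
  have hmono : ∫ x, f x - g x ∂μ ≤ ∫ x, f x * Real.log (f x / g x) ∂μ :=
    integral_mono_ae (hfi.sub hgi) hfgi <| by
      filter_upwards [hf, hg] with x hfx hgx using sub_le_mul_log_div hfx hgx
  rw [integral_sub hfi hgi] at hmono
  linarith

/-- The integrand `π(x | y) i(x_⊥; y_⊥ | x_r, y_s)`, written with `p = π(x, y)`, `q = π(x_r, y_s)`,
`r = π(x, y_s)`, `s = π(x_r, y)` and `m = π(y)`. -/
lemma div_mul_log_pmi_eq {p q r s : ℝ} (m : ℝ) (hq : q ≠ 0) (hs : s ≠ 0) :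
    p / m * Real.log (p / q / (r / q * (s / q))) =
      s / m * (p / s * Real.log (p / s / (r / q))) := by
  have hlog : p / q / (r / q * (s / q)) = p / s / (r / q) := by
    field_simp
  rw [hlog]
  field_simp

theorem stmt3_general {a b c e : ℕ}
    (π : (Fin a → ℝ) → (Fin b → ℝ) → (Fin c → ℝ) → (Fin e → ℝ) → ℝ)
    (hπpos : ∀ xr xp ys yp, 0 < π xr xp ys yp)
    -- marginal densities obtained by integrating out the remaining variables
    (margY : (Fin c → ℝ) → (Fin e → ℝ) → ℝ)
    (margXrYs : (Fin a → ℝ) → (Fin c → ℝ) → ℝ)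
    (hmargXrYs : ∀ xr ys, margXrYs xr ys = ∫ xp : Fin b → ℝ, ∫ yp : Fin e → ℝ, π xr xp ys yp)
    (margXYs : (Fin a → ℝ) → (Fin b → ℝ) → (Fin c → ℝ) → ℝ)
    (hmargXYs : ∀ xr xp ys, margXYs xr xp ys = ∫ yp : Fin e → ℝ, π xr xp ys yp)
    (margXrY : (Fin a → ℝ) → (Fin c → ℝ) → (Fin e → ℝ) → ℝ)
    (hmargXrY : ∀ xr ys yp, margXrY xr ys yp = ∫ xp : Fin b → ℝ, π xr xp ys yp)
    -- positivity of all marginal densities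
    (hmargXrYspos : ∀ xr ys, 0 < margXrYs xr ys)
    (hmargXYspos : ∀ xr xp ys, 0 < margXYs xr xp ys)
    (hmargXrYpos : ∀ xr ys yp, 0 < margXrY xr ys yp)
    -- the observation y = (y_s, y_⊥) with π(y) > 0
    (ys : Fin c → ℝ) (yp : Fin e → ℝ) (hy : 0 < margY ys yp)
    -- existence of the integrals
    (hint1 : ∀ xr : Fin a → ℝ, Integrable (fun xp : Fin b → ℝ =>
      (π xr xp ys yp / margY ys yp) *
        Real.log ((π xr xp ys yp / margXrYs xr ys) /
          ((margXYs xr xp ys / margXrYs xr ys) * (margXrY xr ys yp / margXrYs xr ys))))) :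
    ((∫ xr : Fin a → ℝ, ∫ xp : Fin b → ℝ,
        (π xr xp ys yp / margY ys yp) *
          Real.log ((π xr xp ys yp / margXrYs xr ys) /
            ((margXYs xr xp ys / margXrYs xr ys) * (margXrY xr ys yp / margXrYs xr ys))))
      = ∫ xr : Fin a → ℝ, (margXrY xr ys yp / margY ys yp) *
          ∫ xp : Fin b → ℝ, (π xr xp ys yp / margXrY xr ys yp) *
            Real.log ((π xr xp ys yp / margXrY xr ys yp) /
              (margXYs xr xp ys / margXrYs xr ys)))
    ∧ 0 ≤ ∫ xr : Fin a → ℝ, ∫ xp : Fin b → ℝ,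
        (π xr xp ys yp / margY ys yp) *
          Real.log ((π xr xp ys yp / margXrYs xr ys) /
            ((margXYs xr xp ys / margXrYs xr ys) * (margXrY xr ys yp / margXrYs xr ys))) := by
  have hpmi xr xp := div_mul_log_pmi_eq (p := π xr xp ys yp) (r := margXYs xr xp ys)
    (margY ys yp) (hmargXrYspos xr ys).ne' (hmargXrYpos xr ys yp).ne'
  simp_rw [hpmi, integral_const_mul, true_and]
  refine integral_nonneg fun xr ↦ ?_
  have hs := hmargXrYpos xr ys yp
  have hq := hmargXrYspos xr ys
  have hπi : Integrable (fun xp ↦ π xr xp ys yp) :=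
    .of_integral_ne_zero (hmargXrY xr ys yp ▸ hs.ne')
  have hmarg_int : ∫ xp, margXYs xr xp ys = margXrYs xr ys := by
    simp_rw [hmargXYs, hmargXrYs]
  have hmargi : Integrable (fun xp ↦ margXYs xr xp ys) :=
    .of_integral_ne_zero (hmarg_int ▸ hq.ne')
  have hkl_int : Integrable fun xp ↦ π xr xp ys yp / margXrY xr ys yp *
      Real.log (π xr xp ys yp / margXrY xr ys yp / (margXYs xr xp ys / margXrYs xr ys)) := by
    refine ((hint1 xr).const_mul (margY ys yp / margXrY xr ys yp)).congr (.of_forall fun xp ↦ ?_)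
    dsimp only
    rw [hpmi, ← mul_assoc, ← inv_div (margXrY xr ys yp), inv_mul_cancel₀ (div_pos hs hy).ne',
      one_mul]
  refine mul_nonneg (div_pos hs hy).le (integral_mul_log_div_nonneg
    (.of_forall fun xp ↦ div_pos (hπpos xr xp ys yp) hs)
    (.of_forall fun xp ↦ div_pos (hmargXYspos xr xp ys) hq)
    (hπi.div_const _) (hmargi.div_const _) ?_ hkl_int)
  rw [integral_div, integral_div, hmarg_int, ← hmargXrY, div_self hq.ne', div_self hs.ne']

/-- the expected conditional pointwise mutual information
`∫ π(x|y) i(x_⊥; y_⊥ | x_r, y_s) dx` equals an expectation of KL divergences between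
conditional densities of `x_⊥`, and hence is nonnegative. -/
theorem stmt3 {a b c e : ℕ}
    (π : (Fin a → ℝ) → (Fin b → ℝ) → (Fin c → ℝ) → (Fin e → ℝ) → ℝ)
    (hπpos : ∀ xr xp ys yp, 0 < π xr xp ys yp)
    (hπint : (∫ xr : Fin a → ℝ, ∫ xp : Fin b → ℝ, ∫ ys : Fin c → ℝ, ∫ yp : Fin e → ℝ,
      π xr xp ys yp) = 1)
    -- marginal densities obtained by integrating out the remaining variables
    (margY : (Fin c → ℝ) → (Fin e → ℝ) → ℝ)
    (hmargY : ∀ ys yp, margY ys yp = ∫ xr : Fin a → ℝ, ∫ xp : Fin b → ℝ, π xr xp ys yp)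
    (margXrYs : (Fin a → ℝ) → (Fin c → ℝ) → ℝ)
    (hmargXrYs : ∀ xr ys, margXrYs xr ys = ∫ xp : Fin b → ℝ, ∫ yp : Fin e → ℝ, π xr xp ys yp)
    (margXYs : (Fin a → ℝ) → (Fin b → ℝ) → (Fin c → ℝ) → ℝ)
    (hmargXYs : ∀ xr xp ys, margXYs xr xp ys = ∫ yp : Fin e → ℝ, π xr xp ys yp)
    (margXrY : (Fin a → ℝ) → (Fin c → ℝ) → (Fin e → ℝ) → ℝ)
    (hmargXrY : ∀ xr ys yp, margXrY xr ys yp = ∫ xp : Fin b → ℝ, π xr xp ys yp)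
    -- positivity of all marginal densities
    (hmargYpos : ∀ ys yp, 0 < margY ys yp)
    (hmargXrYspos : ∀ xr ys, 0 < margXrYs xr ys)
    (hmargXYspos : ∀ xr xp ys, 0 < margXYs xr xp ys)
    (hmargXrYpos : ∀ xr ys yp, 0 < margXrY xr ys yp)
    -- the observation y = (y_s, y_⊥) with π(y) > 0
    (ys : Fin c → ℝ) (yp : Fin e → ℝ) (hy : 0 < margY ys yp)
    -- existence of the integrals
    (hint1 : ∀ xr : Fin a → ℝ, Integrable (fun xp : Fin b → ℝ =>
      (π xr xp ys yp / margY ys yp) *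
        Real.log ((π xr xp ys yp / margXrYs xr ys) /
          ((margXYs xr xp ys / margXrYs xr ys) * (margXrY xr ys yp / margXrYs xr ys)))))
    (hint2 : Integrable (fun xr : Fin a → ℝ => ∫ xp : Fin b → ℝ,
      (π xr xp ys yp / margY ys yp) *
        Real.log ((π xr xp ys yp / margXrYs xr ys) /
          ((margXYs xr xp ys / margXrYs xr ys) * (margXrY xr ys yp / margXrYs xr ys))))) :
    ((∫ xr : Fin a → ℝ, ∫ xp : Fin b → ℝ,
        (π xr xp ys yp / margY ys yp) *
          Real.log ((π xr xp ys yp / margXrYs xr ys) /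
            ((margXYs xr xp ys / margXrYs xr ys) * (margXrY xr ys yp / margXrYs xr ys))))
      = ∫ xr : Fin a → ℝ, (margXrY xr ys yp / margY ys yp) *
          ∫ xp : Fin b → ℝ, (π xr xp ys yp / margXrY xr ys yp) *
            Real.log ((π xr xp ys yp / margXrY xr ys yp) /
              (margXYs xr xp ys / margXrYs xr ys)))
    ∧ 0 ≤ ∫ xr : Fin a → ℝ, ∫ xp : Fin b → ℝ,
        (π xr xp ys yp / margY ys yp) *
          Real.log ((π xr xp ys yp / margXrYs xr ys) /
            ((margXYs xr xp ys / margXrYs xr ys) * (margXrY xr ys yp / margXrYs xr ys))) :=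
  stmt3_general π hπpos margY margXrYs hmargXrYs margXYs hmargXYs margXrY hmargXrY hmargXrYspos
    hmargXYspos hmargXrYpos ys yp hy hint1
end

section
/- Let π(x, y) be a positive, integrable joint probability density on ℝ^{d_x} × ℝ^{d_y}, and let [U_r, U_⊥] and [V_s, V_⊥] be orthogonal matrices of sizes d_x × d_x and d_y × d_y, with U_r having r columns and V_s having s columns; write x_r = U_rᵀx, x_⊥ = U_⊥ᵀx, y_s = V_sᵀy, y_⊥ = V_⊥ᵀy. Then for every y with π(y) > 0, assuming all integrals below are finite, the Kullback–Leibler divergence between the true posterior π(x | y) and the reduced posterior π*(x | y) := π(y_s | x_r) π(x) / π(y_s) is bounded as D_KL(π(· | y) ‖ π*(· | y)) ≤ ∫ π(x | y) i(x_⊥; y | x_r) dx + ∫ π(x | y) i(x; y_⊥ | y_s) dx. -/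
open MeasureTheory Matrix
open scoped ENNReal

/-!
Pointwise, the log-ratio of the true to the reduced posterior splits as
`i(x_⊥; y | x_r) + i(x; y_⊥ | y_s) - i(x_⊥; y_⊥ | x_r, y_s)`, so it suffices to show that the
posterior average of the last term is nonnegative. That average is `∫ p log (p / q)` with
`p = π(x | y)` and `q(x) = π(x | y_s) π(x_r | y) / π(x_r | y_s)`; since `x ↦ (U_rᵀ x, U_⊥ᵀ x)` is an
orthogonal change of variables, integrating `q` first over `x_⊥` and then over `x_r` gives total
mass `1`, and Gibbs' inequality `p - q ≤ p log (p / q)` concludes.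
-/

namespace Matrix

variable {m n n₁ n₂ : Type*} [Fintype m] [Fintype n] [Fintype n₁] [Fintype n₂]

theorem abs_det_eq_one_of_transpose_mul_self [DecidableEq n] {M : Matrix n n ℝ}
    (hM : Mᵀ * M = 1) : |M.det| = 1 := by
  have h : M.det * M.det = 1 := by simpa [det_mul, det_transpose] using congrArg det hM
  rcases mul_self_eq_one_iff.mp h with h | h <;> simp [h]

theorem measurePreserving_mulVec_of_transpose_mul_self [DecidableEq n] {M : Matrix n n ℝ}
    (hM : Mᵀ * M = 1) : MeasurePreserving (M *ᵥ ·) volume volume := by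
  have hdet := abs_det_eq_one_of_transpose_mul_self hM
  refine ⟨(toLin' M).continuous_of_finiteDimensional.measurable, ?_⟩
  have h := Real.map_matrix_volume_pi_eq_smul_volume_pi (M := M)
    (abs_ne_zero.mp (hdet ▸ one_ne_zero))
  rwa [abs_inv, hdet, inv_one, ENNReal.ofReal_one, one_smul] at h

theorem measurePreserving_mulVec_of_transpose_mul_self_of_card_eq [DecidableEq n] {W : Matrix m n ℝ}
    (hW : Wᵀ * W = 1) (hcard : Fintype.card n = Fintype.card m) :
    MeasurePreserving (W *ᵥ ·) volume volume := by
  classical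
  let e : n ≃ m := Fintype.equivOfCardEq hcard
  have hM : (W.submatrix id e.symm)ᵀ * W.submatrix id e.symm = 1 := by
    rw [transpose_submatrix, ← submatrix_mul _ _ _ _ _ Function.bijective_id, hW,
      submatrix_one_equiv]
  have hfactor :
      (W *ᵥ ·) = (W.submatrix id e.symm *ᵥ ·) ∘ MeasurableEquiv.piCongrLeft (fun _ => ℝ) e := by
    funext v
    rw [Function.comp_apply, submatrix_mulVec_equiv]
    congr 1
    funext k
    simpa using (MeasurableEquiv.piCongrLeft_apply_apply (β := fun _ => ℝ) e v k).symm
  rw [hfactor]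
  exact (measurePreserving_mulVec_of_transpose_mul_self hM).comp
    (volume_measurePreserving_piCongrLeft _ e)

theorem card_add_card_eq_of_orthogonal [DecidableEq m] [DecidableEq n₁] [DecidableEq n₂]
    {U₁ : Matrix m n₁ ℝ} {U₂ : Matrix m n₂ ℝ} (h₁ : U₁ᵀ * U₁ = 1) (h₂ : U₂ᵀ * U₂ = 1)
    (h : U₁ * U₁ᵀ + U₂ * U₂ᵀ = 1) : Fintype.card n₁ + Fintype.card n₂ = Fintype.card m := by
  have := congrArg trace h
  rw [trace_add, trace_mul_comm U₁, trace_mul_comm U₂, h₁, h₂] at this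
  exact_mod_cast (by simpa using this : (Fintype.card n₁ + Fintype.card n₂ : ℝ) = Fintype.card m)

theorem transpose_mulVec_add_mulVec [DecidableEq n₁] {U₁ : Matrix m n₁ ℝ} {U₂ : Matrix m n₂ ℝ}
    (h₁ : U₁ᵀ * U₁ = 1) (h₁₂ : U₁ᵀ * U₂ = 0)
    (x₁ : n₁ → ℝ) (x₂ : n₂ → ℝ) : U₁ᵀ *ᵥ (U₁ *ᵥ x₁ + U₂ *ᵥ x₂) = x₁ := by
  rw [mulVec_add, mulVec_mulVec, mulVec_mulVec, h₁, h₁₂, one_mulVec, zero_mulVec, add_zero]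

section OrthogonalSplit

variable [DecidableEq m] [DecidableEq n₁] [DecidableEq n₂]
  {U₁ : Matrix m n₁ ℝ} {U₂ : Matrix m n₂ ℝ}

theorem measurePreserving_mulVec_add_mulVec (h₁ : U₁ᵀ * U₁ = 1) (h₂ : U₂ᵀ * U₂ = 1)
    (h₁₂ : U₁ᵀ * U₂ = 0) (h : U₁ * U₁ᵀ + U₂ * U₂ᵀ = 1) :
    MeasurePreserving (fun p : (n₁ → ℝ) × (n₂ → ℝ) => U₁ *ᵥ p.1 + U₂ *ᵥ p.2) volume volume := by
  have h₂₁ : U₂ᵀ * U₁ = 0 := by simpa [transpose_mul] using congrArg transpose h₁₂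
  have hW : (fromCols U₁ U₂)ᵀ * fromCols U₁ U₂ = 1 := by
    rw [transpose_fromCols, fromRows_mul_fromCols, h₁, h₂, h₁₂, h₂₁, fromBlocks_one]
  have hcard : Fintype.card (n₁ ⊕ n₂) = Fintype.card m := by
    rw [Fintype.card_sum, card_add_card_eq_of_orthogonal h₁ h₂ h]
  have hfactor : (fun p : (n₁ → ℝ) × (n₂ → ℝ) => U₁ *ᵥ p.1 + U₂ *ᵥ p.2) =
      (fromCols U₁ U₂ *ᵥ ·) ∘ (MeasurableEquiv.sumPiEquivProdPi fun _ => ℝ).symm := by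
    funext p
    exact (fromCols_mulVec_sumElim U₁ U₂ p.1 p.2).symm
  rw [hfactor]
  exact (measurePreserving_mulVec_of_transpose_mul_self_of_card_eq hW hcard).comp
    (volume_measurePreserving_sumPiEquivProdPi_symm _)

theorem lintegral_eq_lintegral_mulVec_add_mulVec (h₁ : U₁ᵀ * U₁ = 1) (h₂ : U₂ᵀ * U₂ = 1)
    (h₁₂ : U₁ᵀ * U₂ = 0) (h : U₁ * U₁ᵀ + U₂ * U₂ᵀ = 1) {f : (m → ℝ) → ℝ≥0∞}
    (hf : AEMeasurable f) : ∫⁻ x, f x = ∫⁻ x₁, ∫⁻ x₂, f (U₁ *ᵥ x₁ + U₂ *ᵥ x₂) := by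
  have hφ := measurePreserving_mulVec_add_mulVec h₁ h₂ h₁₂ h
  have hfφ := hf.comp_quasiMeasurePreserving hφ.quasiMeasurePreserving
  rw [← hφ.map_eq, lintegral_map' (hφ.map_eq ▸ hf) hφ.measurable.aemeasurable,
    Measure.volume_eq_prod]
  exact lintegral_prod _ hfφ

theorem lintegral_ofReal_integral_mulVec_add_mulVec (h₁ : U₁ᵀ * U₁ = 1) (h₂ : U₂ᵀ * U₂ = 1)
    (h₁₂ : U₁ᵀ * U₂ = 0) (h : U₁ * U₁ᵀ + U₂ * U₂ᵀ = 1) {g : (m → ℝ) → ℝ} {c : (n₁ → ℝ) → ℝ}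
    (hg : ∀ x, 0 ≤ g x) (hgm : AEMeasurable g)
    (hc : ∀ x₁, c x₁ = ∫ x₂, g (U₁ *ᵥ x₁ + U₂ *ᵥ x₂))
    (hfib : ∀ x₁, Integrable fun x₂ => g (U₁ *ᵥ x₁ + U₂ *ᵥ x₂)) :
    ∫⁻ x₁, ENNReal.ofReal (c x₁) = ∫⁻ x, ENNReal.ofReal (g x) := by
  rw [lintegral_eq_lintegral_mulVec_add_mulVec h₁ h₂ h₁₂ h hgm.ennreal_ofReal]
  refine lintegral_congr fun x₁ => ?_
  rw [hc, ofReal_integral_eq_lintegral_ofReal (hfib x₁) (ae_of_all _ fun _ => hg _)]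

theorem lintegral_ofReal_mul_div_integral_mulVec_add_mulVec (h₁ : U₁ᵀ * U₁ = 1)
    (h₂ : U₂ᵀ * U₂ = 1) (h₁₂ : U₁ᵀ * U₂ = 0) (h : U₁ * U₁ᵀ + U₂ * U₂ᵀ = 1)
    {g : (m → ℝ) → ℝ} {c G : (n₁ → ℝ) → ℝ} (hg : ∀ x, 0 ≤ g x) (hc : ∀ x₁, 0 ≤ c x₁)
    (hG : ∀ x₁, G x₁ = ∫ x₂, g (U₁ *ᵥ x₁ + U₂ *ᵥ x₂)) (hGpos : ∀ x₁, 0 < G x₁)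
    (hm : AEMeasurable fun x => g x * c (U₁ᵀ *ᵥ x) / G (U₁ᵀ *ᵥ x)) :
    ∫⁻ x, ENNReal.ofReal (g x * c (U₁ᵀ *ᵥ x) / G (U₁ᵀ *ᵥ x)) = ∫⁻ x₁, ENNReal.ofReal (c x₁) := by
  rw [lintegral_eq_lintegral_mulVec_add_mulVec h₁ h₂ h₁₂ h hm.ennreal_ofReal]
  refine lintegral_congr fun x₁ => ?_
  simp only [transpose_mulVec_add_mulVec h₁ h₁₂]
  have hfib : Integrable fun x₂ => g (U₁ *ᵥ x₁ + U₂ *ᵥ x₂) :=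
    Integrable.of_integral_ne_zero (hG x₁ ▸ (hGpos x₁).ne')
  rw [← ofReal_integral_eq_lintegral_ofReal ((hfib.mul_const _).div_const _)
      (ae_of_all _ fun _ => div_nonneg (mul_nonneg (hg _) (hc x₁)) (hGpos x₁).le),
    integral_div, integral_mul_const, ← hG, mul_div_cancel_left₀ _ (hGpos x₁).ne']

end OrthogonalSplit

end Matrix

theorem Real.sub_le_mul_log_div {p q : ℝ} (hp : 0 ≤ p) (hq : 0 < q) : p - q ≤ p * Real.log (p / q) := by
  have h := mul_le_mul_of_nonneg_left (Real.self_sub_one_le_mul_log (div_nonneg hp hq.le)) hq.le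
  calc p - q = q * (p / q - 1) := by field_simp
    _ ≤ q * (p / q * Real.log (p / q)) := h
    _ = p * Real.log (p / q) := by field_simp

section Gibbs

variable {α : Type*} [MeasurableSpace α] {μ : Measure α} {p q : α → ℝ}

theorem aemeasurable_of_aemeasurable_mul_log_div (hp : ∀ x, 0 < p x) (hq : ∀ x, 0 < q x)
    (hpm : AEMeasurable p μ) (hpq : AEMeasurable (fun x => p x * Real.log (p x / q x)) μ) :
    AEMeasurable q μ := by
  have hq_eq : q = fun x => p x / Real.exp (p x * Real.log (p x / q x) / p x) := by
    funext x
    rw [mul_div_cancel_left₀ _ (hp x).ne', Real.exp_log (div_pos (hp x) (hq x)),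
      div_div_cancel₀ (hp x).ne']
  rw [hq_eq]
  exact hpm.div (hpq.div hpm).exp

theorem integral_sub_le_integral_mul_log_div (hp : ∀ x, 0 ≤ p x) (hq : ∀ x, 0 < q x)
    (hpi : Integrable p μ) (hqi : Integrable q μ)
    (hpq : Integrable (fun x => p x * Real.log (p x / q x)) μ) :
    ∫ x, p x ∂μ - ∫ x, q x ∂μ ≤ ∫ x, p x * Real.log (p x / q x) ∂μ := by
  rw [← integral_sub hpi hqi]
  exact integral_mono (hpi.sub hqi) hpq fun x => Real.sub_le_mul_log_div (hp x) (hq x)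

theorem integral_mul_log_div_nonneg_s4 (hp : ∀ x, 0 ≤ p x) (hq : ∀ x, 0 < q x)
    (hpi : Integrable p μ) (hpq : Integrable (fun x => p x * Real.log (p x / q x)) μ)
    (hqm : AEMeasurable q μ)
    (hmass : ∫⁻ x, ENNReal.ofReal (q x) ∂μ ≤ ENNReal.ofReal (∫ x, p x ∂μ)) :
    0 ≤ ∫ x, p x * Real.log (p x / q x) ∂μ := by
  have hq0 : 0 ≤ᵐ[μ] q := ae_of_all _ fun x => (hq x).le
  have hqi : Integrable q μ :=
    (lintegral_ofReal_ne_top_iff_integrable hqm.aestronglyMeasurable hq0).mp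
      (ne_top_of_le_ne_top ENNReal.ofReal_ne_top hmass)
  have hle : ∫ x, q x ∂μ ≤ ∫ x, p x ∂μ := by
    rw [integral_eq_lintegral_of_nonneg_ae hq0 hqm.aestronglyMeasurable]
    exact ENNReal.toReal_le_of_le_ofReal (integral_nonneg hp) hmass
  linarith [integral_sub_le_integral_mul_log_div hp hq hpi hqi hpq]

end Gibbs

theorem log_posterior_ratio_eq {a pY pX pXr pYs pXrYs pXYs pXrY : ℝ} (ha : 0 < a) (hY : 0 < pY)
    (hX : 0 < pX) (hXr : 0 < pXr) (hYs : 0 < pYs) (hXrYs : 0 < pXrYs) (hXYs : 0 < pXYs)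
    (hXrY : 0 < pXrY) :
    Real.log ((a / pY) / (pXrYs / pXr * pX / pYs)) =
      Real.log ((a / pXr) / ((pX / pXr) * (pXrY / pXr))) +
        Real.log ((a / pYs) / ((pXYs / pYs) * (pY / pYs))) -
        Real.log ((a / pXrYs) / ((pXYs / pXrYs) * (pXrY / pXrYs))) := by
  simp only [Real.log_div, Real.log_mul, div_ne_zero_iff, mul_ne_zero_iff, ne_eq, ha.ne', hY.ne',
    hX.ne', hXr.ne', hYs.ne', hXrYs.ne', hXYs.ne', hXrY.ne', not_false_eq_true, and_self]
  ring

theorem stmt4_general {dx dy r rp s sp : ℕ}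
    (π : (Fin dx → ℝ) → (Fin dy → ℝ) → ℝ)
    (hπpos : ∀ x y, 0 < π x y)
    (Ur : Matrix (Fin dx) (Fin r) ℝ) (Up : Matrix (Fin dx) (Fin rp) ℝ)
    (Vs : Matrix (Fin dy) (Fin s) ℝ) (Vp : Matrix (Fin dy) (Fin sp) ℝ)
    (hU1 : Urᵀ * Ur = 1) (hU2 : Upᵀ * Up = 1) (hU3 : Urᵀ * Up = 0)
    (hU4 : Ur * Urᵀ + Up * Upᵀ = 1)
    -- marginal densities obtained by integrating the (transported) joint density
    (margX : (Fin dx → ℝ) → ℝ)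
    (margY : (Fin dy → ℝ) → ℝ) (hmargY : ∀ y, margY y = ∫ x : Fin dx → ℝ, π x y)
    (margXrYs : (Fin r → ℝ) → (Fin s → ℝ) → ℝ)
    (hmargXrYs : ∀ xr ys, margXrYs xr ys =
      ∫ xp : Fin rp → ℝ, ∫ yp : Fin sp → ℝ,
        π (Ur *ᵥ xr + Up *ᵥ xp) (Vs *ᵥ ys + Vp *ᵥ yp))
    (margXr : (Fin r → ℝ) → ℝ)
    (margYs : (Fin s → ℝ) → ℝ)
    (margXYs : (Fin dx → ℝ) → (Fin s → ℝ) → ℝ)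
    (hmargXYs : ∀ x ys, margXYs x ys = ∫ yp : Fin sp → ℝ, π x (Vs *ᵥ ys + Vp *ᵥ yp))
    (margXrY : (Fin r → ℝ) → (Fin dy → ℝ) → ℝ)
    (hmargXrY : ∀ xr y, margXrY xr y = ∫ xp : Fin rp → ℝ, π (Ur *ᵥ xr + Up *ᵥ xp) y)
    -- positivity of all marginal densities
    (hmargXpos : ∀ x, 0 < margX x)
    (hmargXrYspos : ∀ xr ys, 0 < margXrYs xr ys)
    (hmargXrpos : ∀ xr, 0 < margXr xr) (hmargYspos : ∀ ys, 0 < margYs ys)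
    (hmargXYspos : ∀ x ys, 0 < margXYs x ys)
    (hmargXrYpos : ∀ xr y, 0 < margXrY xr y)
    -- the observation
    (y : Fin dy → ℝ) (hy : 0 < margY y)
    -- finiteness of the integrals below
    (hint1 : Integrable (fun x : Fin dx → ℝ => (π x y / margY y) *
      Real.log ((π x y / margXr (Urᵀ *ᵥ x)) /
        ((margX x / margXr (Urᵀ *ᵥ x)) * (margXrY (Urᵀ *ᵥ x) y / margXr (Urᵀ *ᵥ x))))))
    (hint2 : Integrable (fun x : Fin dx → ℝ => (π x y / margY y) *
      Real.log ((π x y / margYs (Vsᵀ *ᵥ y)) /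
        ((margXYs x (Vsᵀ *ᵥ y) / margYs (Vsᵀ *ᵥ y)) * (margY y / margYs (Vsᵀ *ᵥ y))))))
    (hint3 : Integrable (fun x : Fin dx → ℝ => (π x y / margY y) *
      Real.log ((π x y / margXrYs (Urᵀ *ᵥ x) (Vsᵀ *ᵥ y)) /
        ((margXYs x (Vsᵀ *ᵥ y) / margXrYs (Urᵀ *ᵥ x) (Vsᵀ *ᵥ y)) *
          (margXrY (Urᵀ *ᵥ x) y / margXrYs (Urᵀ *ᵥ x) (Vsᵀ *ᵥ y)))))) :
    (∫ x : Fin dx → ℝ, (π x y / margY y) *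
        Real.log ((π x y / margY y) /
          (margXrYs (Urᵀ *ᵥ x) (Vsᵀ *ᵥ y) / margXr (Urᵀ *ᵥ x) * margX x /
            margYs (Vsᵀ *ᵥ y))))
      ≤ (∫ x : Fin dx → ℝ, (π x y / margY y) *
          Real.log ((π x y / margXr (Urᵀ *ᵥ x)) /
            ((margX x / margXr (Urᵀ *ᵥ x)) * (margXrY (Urᵀ *ᵥ x) y / margXr (Urᵀ *ᵥ x)))))
        + ∫ x : Fin dx → ℝ, (π x y / margY y) *
            Real.log ((π x y / margYs (Vsᵀ *ᵥ y)) /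
              ((margXYs x (Vsᵀ *ᵥ y) / margYs (Vsᵀ *ᵥ y)) *
                (margY y / margYs (Vsᵀ *ᵥ y)))) := by
  set ys := Vsᵀ *ᵥ y
  set p : (Fin dx → ℝ) → ℝ := fun x => π x y / margY y with hp_def
  set c : (Fin r → ℝ) → ℝ := fun xr => margXrY xr y / margY y with hc_def
  set q : (Fin dx → ℝ) → ℝ := fun x => margXYs x ys * c (Urᵀ *ᵥ x) / margXrYs (Urᵀ *ᵥ x) ys
    with hq_def
  have hp : ∀ x, 0 < p x := fun x => div_pos (hπpos x y) hy
  have hc : ∀ xr, 0 < c xr := fun xr => div_pos (hmargXrYpos xr y) hy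
  have hq : ∀ x, 0 < q x := fun x =>
    div_pos (mul_pos (hmargXYspos x ys) (hc _)) (hmargXrYspos _ ys)
  have hpi : Integrable p := (Integrable.of_integral_ne_zero (hmargY y ▸ hy.ne')).div_const _
  have hpq_eq : ∀ x, (π x y / margXrYs (Urᵀ *ᵥ x) ys) /
      ((margXYs x ys / margXrYs (Urᵀ *ᵥ x) ys) * (margXrY (Urᵀ *ᵥ x) y / margXrYs (Urᵀ *ᵥ x) ys))
        = p x / q x := fun x => by
    simp only [hp_def, hq_def, hc_def]
    field_simp [(hmargXrYspos _ ys).ne', (hmargXYspos x ys).ne', (hmargXrYpos _ y).ne']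
  simp only [hpq_eq] at hint3
  have hqm := aemeasurable_of_aemeasurable_mul_log_div hp hq hpi.aemeasurable hint3.aemeasurable
  have hmass : ∫⁻ x, ENNReal.ofReal (q x) = ENNReal.ofReal (∫ x, p x) := by
    have hfib xr : Integrable fun xp => p (Ur *ᵥ xr + Up *ᵥ xp) :=
      (Integrable.of_integral_ne_zero (hmargXrY xr y ▸ (hmargXrYpos xr y).ne')).div_const _
    rw [lintegral_ofReal_mul_div_integral_mulVec_add_mulVec hU1 hU2 hU3 hU4
        (fun x => (hmargXYspos x ys).le) (fun xr => (hc xr).le)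
        (fun xr => by simp only [hmargXrYs, hmargXYs]) (fun xr => hmargXrYspos xr ys) hqm,
      lintegral_ofReal_integral_mulVec_add_mulVec hU1 hU2 hU3 hU4 (fun x => (hp x).le)
        hpi.aemeasurable (fun xr => by simp only [hc_def, hp_def, hmargXrY, integral_div]) hfib,
      ofReal_integral_eq_lintegral_ofReal hpi (ae_of_all _ fun x => (hp x).le)]
  have hgibbs : 0 ≤ ∫ x, π x y / margY y * Real.log (p x / q x) :=
    integral_mul_log_div_nonneg_s4 (fun x => (hp x).le) hq hpi hint3 hqm hmass.le
  rw [integral_congr_ae (ae_of_all _ fun x => ?_), integral_sub (hint1.add hint2) hint3,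
    integral_add' hint1 hint2]
  · linarith
  · rw [Pi.add_apply, ← hpq_eq x, log_posterior_ratio_eq (hπpos x y) hy (hmargXpos x)
      (hmargXrpos _) (hmargYspos ys) (hmargXrYspos _ ys) (hmargXYspos x ys) (hmargXrYpos _ y)]
    ring

/-- the upper bound
`D_KL(π(·|y) ‖ π*(·|y)) ≤ ∫ π(x|y) i(x_⊥; y | x_r) dx + ∫ π(x|y) i(x; y_⊥ | y_s) dx`
for the reduced posterior `π*(x|y) = π(y_s|x_r) π(x) / π(y_s)`. -/
theorem stmt4 {dx dy r rp s sp : ℕ}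
    (π : (Fin dx → ℝ) → (Fin dy → ℝ) → ℝ)
    (hπpos : ∀ x y, 0 < π x y)
    (hπint : (∫ x : Fin dx → ℝ, ∫ y : Fin dy → ℝ, π x y) = 1)
    (Ur : Matrix (Fin dx) (Fin r) ℝ) (Up : Matrix (Fin dx) (Fin rp) ℝ)
    (Vs : Matrix (Fin dy) (Fin s) ℝ) (Vp : Matrix (Fin dy) (Fin sp) ℝ)
    (hU1 : Urᵀ * Ur = 1) (hU2 : Upᵀ * Up = 1) (hU3 : Urᵀ * Up = 0)
    (hU4 : Ur * Urᵀ + Up * Upᵀ = 1)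
    (hV1 : Vsᵀ * Vs = 1) (hV2 : Vpᵀ * Vp = 1) (hV3 : Vsᵀ * Vp = 0)
    (hV4 : Vs * Vsᵀ + Vp * Vpᵀ = 1)
    -- marginal densities obtained by integrating the (transported) joint density
    (margX : (Fin dx → ℝ) → ℝ) (hmargX : ∀ x, margX x = ∫ y : Fin dy → ℝ, π x y)
    (margY : (Fin dy → ℝ) → ℝ) (hmargY : ∀ y, margY y = ∫ x : Fin dx → ℝ, π x y)
    (margXrYs : (Fin r → ℝ) → (Fin s → ℝ) → ℝ)
    (hmargXrYs : ∀ xr ys, margXrYs xr ys =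
      ∫ xp : Fin rp → ℝ, ∫ yp : Fin sp → ℝ,
        π (Ur *ᵥ xr + Up *ᵥ xp) (Vs *ᵥ ys + Vp *ᵥ yp))
    (margXr : (Fin r → ℝ) → ℝ)
    (hmargXr : ∀ xr, margXr xr =
      ∫ xp : Fin rp → ℝ, ∫ ys : Fin s → ℝ, ∫ yp : Fin sp → ℝ,
        π (Ur *ᵥ xr + Up *ᵥ xp) (Vs *ᵥ ys + Vp *ᵥ yp))
    (margYs : (Fin s → ℝ) → ℝ)
    (hmargYs : ∀ ys, margYs ys =
      ∫ xr : Fin r → ℝ, ∫ xp : Fin rp → ℝ, ∫ yp : Fin sp → ℝ,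
        π (Ur *ᵥ xr + Up *ᵥ xp) (Vs *ᵥ ys + Vp *ᵥ yp))
    (margXYs : (Fin dx → ℝ) → (Fin s → ℝ) → ℝ)
    (hmargXYs : ∀ x ys, margXYs x ys = ∫ yp : Fin sp → ℝ, π x (Vs *ᵥ ys + Vp *ᵥ yp))
    (margXrY : (Fin r → ℝ) → (Fin dy → ℝ) → ℝ)
    (hmargXrY : ∀ xr y, margXrY xr y = ∫ xp : Fin rp → ℝ, π (Ur *ᵥ xr + Up *ᵥ xp) y)
    -- positivity of all marginal densities
    (hmargXpos : ∀ x, 0 < margX x) (hmargYpos : ∀ y, 0 < margY y)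
    (hmargXrYspos : ∀ xr ys, 0 < margXrYs xr ys)
    (hmargXrpos : ∀ xr, 0 < margXr xr) (hmargYspos : ∀ ys, 0 < margYs ys)
    (hmargXYspos : ∀ x ys, 0 < margXYs x ys)
    (hmargXrYpos : ∀ xr y, 0 < margXrY xr y)
    -- the observation
    (y : Fin dy → ℝ) (hy : 0 < margY y)
    -- finiteness of the integrals below
    (hintKL : Integrable (fun x : Fin dx → ℝ => (π x y / margY y) *
      Real.log ((π x y / margY y) /
        (margXrYs (Urᵀ *ᵥ x) (Vsᵀ *ᵥ y) / margXr (Urᵀ *ᵥ x) * margX x /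
          margYs (Vsᵀ *ᵥ y)))))
    (hint1 : Integrable (fun x : Fin dx → ℝ => (π x y / margY y) *
      Real.log ((π x y / margXr (Urᵀ *ᵥ x)) /
        ((margX x / margXr (Urᵀ *ᵥ x)) * (margXrY (Urᵀ *ᵥ x) y / margXr (Urᵀ *ᵥ x))))))
    (hint2 : Integrable (fun x : Fin dx → ℝ => (π x y / margY y) *
      Real.log ((π x y / margYs (Vsᵀ *ᵥ y)) /
        ((margXYs x (Vsᵀ *ᵥ y) / margYs (Vsᵀ *ᵥ y)) * (margY y / margYs (Vsᵀ *ᵥ y))))))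
    (hint3 : Integrable (fun x : Fin dx → ℝ => (π x y / margY y) *
      Real.log ((π x y / margXrYs (Urᵀ *ᵥ x) (Vsᵀ *ᵥ y)) /
        ((margXYs x (Vsᵀ *ᵥ y) / margXrYs (Urᵀ *ᵥ x) (Vsᵀ *ᵥ y)) *
          (margXrY (Urᵀ *ᵥ x) y / margXrYs (Urᵀ *ᵥ x) (Vsᵀ *ᵥ y)))))) :
    (∫ x : Fin dx → ℝ, (π x y / margY y) *
        Real.log ((π x y / margY y) /
          (margXrYs (Urᵀ *ᵥ x) (Vsᵀ *ᵥ y) / margXr (Urᵀ *ᵥ x) * margX x /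
            margYs (Vsᵀ *ᵥ y))))
      ≤ (∫ x : Fin dx → ℝ, (π x y / margY y) *
          Real.log ((π x y / margXr (Urᵀ *ᵥ x)) /
            ((margX x / margXr (Urᵀ *ᵥ x)) * (margXrY (Urᵀ *ᵥ x) y / margXr (Urᵀ *ᵥ x)))))
        + ∫ x : Fin dx → ℝ, (π x y / margY y) *
            Real.log ((π x y / margYs (Vsᵀ *ᵥ y)) /
              ((margXYs x (Vsᵀ *ᵥ y) / margYs (Vsᵀ *ᵥ y)) *
                (margY y / margYs (Vsᵀ *ᵥ y)))) :=
  stmt4_general π hπpos Ur Up Vs Vp hU1 hU2 hU3 hU4 margX margY hmargY margXrYs hmargXrYs margXr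
    margYs margXYs hmargXYs margXrY hmargXrY hmargXpos hmargXrYspos hmargXrpos hmargYspos
    hmargXYspos hmargXrYpos y hy hint1 hint2 hint3
end

section
/- Let π(x, y) be a smooth, positive joint probability density on ℝ^{d_x} × ℝ^{d_y} satisfying the subspace logarithmic Sobolev inequality with constant C̄, and let [V_s, V_⊥] ∈ ℝ^{d_y × d_y} be orthogonal with V_s having s columns; write y = V_s y_s + V_⊥ y_⊥, with conditional densities π(x | y) := π(x, y)/π(y), π(x | y_s) and π(y_s | x) defined by marginalizing the transported joint density over y_⊥, all assumed positive and smooth. Then for every probability density p on ℝ^{d_y}, assuming all the relevant integrals are finite and the function x ↦ π(x, y_⊥ | y_s)/π(x | y_s) (for fixed y) is smooth and positive, one has ∬ log( π(y | x) π(y_s) / (π(y_s | x) π(y)) ) π(x | y) p(y) dx dy ≤ (C̄/2) ∬ ‖∇_x log π(y | x) − ∇_x log π(y_s | x)‖² π(x | y) p(y) dx dy. -/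
open MeasureTheory Matrix

noncomputable section

abbrev Evec (n : ℕ) : Type := EuclideanSpace ℝ (Fin n)

/-- Logarithmic Sobolev inequality with constant `C`. -/
def SatisfiesLSI {n : ℕ} (ρ : Evec n → ℝ) (C : ℝ) : Prop :=
  ∀ h : Evec n → ℝ, ContDiff ℝ (⊤ : ℕ∞) h → (∀ z, 0 < h z) →
    (∫ z, h z * ρ z) = 1 →
    (∫ z, h z * Real.log (h z) * ρ z) ≤
      (C / 2) * ∫ z, h z * ‖gradient (fun w => Real.log (h w)) z‖ ^ 2 * ρ z

/-- Subspace logarithmic Sobolev inequality with constant `C`. -/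
def SatisfiesSubspaceLSI {n : ℕ} (ρ : Evec n → ℝ) (C : ℝ) : Prop :=
  ∀ (t u : ℕ) (Wt : Matrix (Fin n) (Fin t) ℝ) (Wp : Matrix (Fin n) (Fin u) ℝ),
    Wtᵀ * Wt = 1 → Wpᵀ * Wp = 1 → Wtᵀ * Wp = 0 → Wt * Wtᵀ + Wp * Wpᵀ = 1 →
    ∀ zp : Evec u,
      (0 < ∫ zt : Evec t, ρ (WithLp.toLp 2 (Wt *ᵥ zt + Wp *ᵥ zp))) →
      SatisfiesLSI
        (fun zt : Evec t =>
          ρ (WithLp.toLp 2 (Wt *ᵥ zt + Wp *ᵥ zp)) / ∫ zt' : Evec t, ρ (WithLp.toLp 2 (Wt *ᵥ zt' + Wp *ᵥ zp))) C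

/-- Concatenation `(x, y) ∈ ℝ^{d_x} × ℝ^{d_y} ↦ ℝ^{d_x + d_y}`. -/
def jointAppend {dx dy : ℕ} (x : Evec dx) (y : Evec dy) : Evec (dx + dy) :=
  WithLp.toLp 2 (Fin.append x y)

/-!
Fix `y` and put `y_s = V_sᵀ y`. The density `(x, y_⊥) ↦ π(x, V_s y_s + V_⊥ y_⊥) / π(y_s)` is the
restriction of `π` to an affine subspace, so it satisfies the LSI with constant `C̄`; integrating
out `y_⊥` preserves the LSI, hence `π(x | y_s)` satisfies it as well. Test it with the likelihood
ratio `h = π(y | x) π(y_s) / (π(y_s | x) π(y)) = π(x | y) / π(x | y_s)`: then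
`h π(x | y_s) = π(x | y)` and, the `x`-marginal cancelling,
`∇ log h = ∇_x log π(y | x) - ∇_x log π(y_s | x)`. This is the claim for each `y`; integrate
against `p`.
-/

namespace Matrix

variable {n k l : Type*} [Fintype n] [Fintype k] [Fintype l]
  [DecidableEq n] [DecidableEq k] [DecidableEq l]

def IsOrthogonalPair (A : Matrix n k ℝ) (B : Matrix n l ℝ) : Prop :=
  Aᵀ * A = 1 ∧ Bᵀ * B = 1 ∧ Aᵀ * B = 0 ∧ A * Aᵀ + B * Bᵀ = 1

namespace IsOrthogonalPair

variable {A : Matrix n k ℝ} {B : Matrix n l ℝ}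

lemma swap (h : IsOrthogonalPair A B) : IsOrthogonalPair B A := by
  obtain ⟨hA, hB, hAB, hcomp⟩ := h
  refine ⟨hB, hA, ?_, by rwa [add_comm]⟩
  rw [← transpose_transpose (Bᵀ * A), transpose_mul, transpose_transpose, hAB, transpose_zero]

lemma fromBlocks_one {m : Type*} [Fintype m] [DecidableEq m] (h : IsOrthogonalPair A B) :
    IsOrthogonalPair (fromBlocks (1 : Matrix m m ℝ) 0 0 A) (fromRows (0 : Matrix m l ℝ) B) := by
  obtain ⟨hA, hB, hAB, hcomp⟩ := h
  refine ⟨?_, ?_, ?_, ?_⟩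
  · simp [fromBlocks_transpose, fromBlocks_multiply, hA]
  · simp [transpose_fromRows, fromCols_mul_fromRows, hB]
  · simp [fromBlocks_transpose, fromBlocks_mul_fromRows, hAB]
  · rw [transpose_fromRows, fromRows_mul_fromCols, fromBlocks_transpose, fromBlocks_multiply,
      fromBlocks_add, ← Matrix.fromBlocks_one]
    simp [hcomp]

lemma reindex {n' k' l' : Type*} [Fintype n'] [Fintype k'] [Fintype l'] [DecidableEq n']
    [DecidableEq k'] [DecidableEq l'] (h : IsOrthogonalPair A B) (e : n ≃ n') (f : k ≃ k')
    (g : l ≃ l') : IsOrthogonalPair (reindex e f A) (reindex e g B) := by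
  obtain ⟨hA, hB, hAB, hcomp⟩ := h
  refine ⟨?_, ?_, ?_, ?_⟩
  · simp [submatrix_mul_equiv, hA]
  · simp [submatrix_mul_equiv, hB]
  · simp [submatrix_mul_equiv, hAB]
  · simp only [reindex_apply, transpose_submatrix, submatrix_mul_equiv]
    rw [← submatrix_one_equiv e.symm, ← hcomp]
    rfl

end IsOrthogonalPair

end Matrix

section jointAppend

variable {m k : ℕ}

@[simp]
lemma jointAppend_castAdd (x : Evec m) (y : Evec k) (i : Fin m) :
    jointAppend x y (Fin.castAdd k i) = x i :=
  Fin.append_left x y i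

@[simp]
lemma jointAppend_natAdd (x : Evec m) (y : Evec k) (i : Fin k) :
    jointAppend x y (Fin.natAdd m i) = y i :=
  Fin.append_right x y i

lemma jointAppend_eq_finAddEquivProd_symm (x : Evec m) (y : Evec k) :
    jointAppend x y = EuclideanSpace.finAddEquivProd.symm (x, y) := by
  ext i
  induction i using Fin.addCases <;> simp

lemma continuous_jointAppend : Continuous fun z : Evec m × Evec k => jointAppend z.1 z.2 := by
  simp_rw [jointAppend_eq_finAddEquivProd_symm]
  exact EuclideanSpace.finAddEquivProd.symm.continuous

lemma measurePreserving_jointAppend :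
    MeasurePreserving (fun z : Evec m × Evec k => jointAppend z.1 z.2) := by
  have h := (EuclideanSpace.volume_preserving_symm_measurableEquiv_toLp (Fin (m + k))).symm.comp
    ((volume_measurePreserving_piCongrLeft (fun _ => ℝ) finSumFinEquiv).comp
      ((volume_measurePreserving_sumPiEquivProdPi_symm (fun _ : Fin m ⊕ Fin k => ℝ)).comp
        ((EuclideanSpace.volume_preserving_symm_measurableEquiv_toLp (Fin m)).prod
          (EuclideanSpace.volume_preserving_symm_measurableEquiv_toLp (Fin k)))))
  rw [← Measure.volume_eq_prod] at h
  convert h using 1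
  funext z
  ext i
  induction i using Fin.addCases with
  | left i =>
    rw [jointAppend_castAdd]
    exact (Equiv.piCongrLeft_sumInl (fun _ => ℝ) finSumFinEquiv z.1.ofLp z.2.ofLp i).symm
  | right i =>
    rw [jointAppend_natAdd]
    exact (Equiv.piCongrLeft_sumInr (fun _ => ℝ) finSumFinEquiv z.1.ofLp z.2.ofLp i).symm

lemma integral_jointAppend (F : Evec (m + k) → ℝ) :
    ∫ z : Evec m × Evec k, F (jointAppend z.1 z.2) = ∫ w, F w := by
  simp_rw [jointAppend_eq_finAddEquivProd_symm]
  have := measurePreserving_jointAppend (m := m) (k := k)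
  simp_rw [jointAppend_eq_finAddEquivProd_symm] at this
  exact this.integral_comp
    (EuclideanSpace.finAddEquivProd.symm.toHomeomorph.measurableEmbedding) F

lemma norm_jointAppend_zero (x : Evec m) : ‖jointAppend x (0 : Evec k)‖ = ‖x‖ := by
  simp [EuclideanSpace.norm_eq, Fin.sum_univ_add]

variable (m k) in
def appendFst : Evec (m + k) →L[ℝ] Evec m :=
  (ContinuousLinearMap.fst ℝ _ _).comp
    (EuclideanSpace.finAddEquivProd : Evec (m + k) ≃L[ℝ] _).toContinuousLinearMap

@[simp]
lemma appendFst_apply (w : Evec (m + k)) (i : Fin m) :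
    appendFst m k w i = w (Fin.castAdd k i) := by
  simp [appendFst]

@[simp]
lemma appendFst_jointAppend (x : Evec m) (y : Evec k) :
    appendFst m k (jointAppend x y) = x := by
  ext i; simp

lemma inner_appendFst (x : Evec m) (w : Evec (m + k)) :
    inner ℝ x (appendFst m k w) = inner ℝ (jointAppend x 0) w := by
  simp [PiLp.inner_apply, Fin.sum_univ_add]

lemma HasGradientAt.comp_appendFst {f : Evec m → ℝ} {g : Evec m} {w : Evec (m + k)}
    (hf : HasGradientAt f g (appendFst m k w)) :
    HasGradientAt (f ∘ appendFst m k) (jointAppend g 0) w := by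
  have h := hf.hasFDerivAt.comp w (appendFst m k).hasFDerivAt
  have hdual : (InnerProductSpace.toDual ℝ (Evec m) g).comp (appendFst m k) =
      InnerProductSpace.toDual ℝ (Evec (m + k)) (jointAppend g 0) := by
    ext v
    simp only [ContinuousLinearMap.comp_apply, InnerProductSpace.toDual_apply_apply]
    exact inner_appendFst g v
  rw [hdual] at h
  simpa using h.hasGradientAt

end jointAppend

section gradient

variable {E : Type*} [NormedAddCommGroup E] [InnerProductSpace ℝ E] [CompleteSpace E]
  {f g : E → ℝ} {f' g' x : E}

lemma HasGradientAt.sub (hf : HasGradientAt f f' x) (hg : HasGradientAt g g' x) :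
    HasGradientAt (fun x => f x - g x) (f' - g') x := by
  rw [hasGradientAt_iff_hasFDerivAt] at *
  rw [map_sub]
  exact hf.sub hg

lemma HasGradientAt.add_const (hf : HasGradientAt f f' x) (c : ℝ) :
    HasGradientAt (fun x => f x + c) f' x := by
  rw [hasGradientAt_iff_hasFDerivAt] at *
  exact hf.add_const c

lemma measurable_gradient [MeasurableSpace E] [BorelSpace E] (f : E → ℝ) :
    Measurable (gradient f) :=
  (InnerProductSpace.toDual ℝ E).symm.continuous.measurable.comp (measurable_fderiv ℝ f)

end gradient

/-- No integrability is assumed: when one side is not integrable, neither is the other, and both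
integrals are `0`. -/
theorem integral_prod_mul_comp_fst {α β : Type*} [MeasurableSpace α] [MeasurableSpace β]
    {μ : Measure α} {ν : Measure β} [SFinite μ] [SFinite ν] {f : α × β → ℝ} {φ : α → ℝ}
    (hf0 : ∀ z, 0 ≤ f z) (hf : AEStronglyMeasurable f (μ.prod ν))
    (hφ : AEStronglyMeasurable φ μ) (hsect : ∀ x, Integrable (fun y => f (x, y)) ν) :
    ∫ z, φ z.1 * f z ∂μ.prod ν = ∫ x, φ x * ∫ y, f (x, y) ∂ν ∂μ := by
  by_cases hint : Integrable (fun z => φ z.1 * f z) (μ.prod ν)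
  · rw [integral_prod _ hint]
    simp_rw [integral_const_mul]
  rw [integral_undef hint, integral_undef]
  intro hmarg
  have hmeas : AEStronglyMeasurable (fun z => φ z.1 * f z) (μ.prod ν) :=
    (hφ.comp_fst (ν := ν)).mul hf
  refine hint ((integrable_prod_iff hmeas).2
    ⟨.of_forall fun x => (hsect x).const_mul (φ x), hmarg.norm.congr (.of_forall fun x => ?_)⟩)
  simp_rw [norm_mul, Real.norm_of_nonneg (hf0 _), integral_const_mul,
    Real.norm_of_nonneg (integral_nonneg fun y => hf0 (x, y))]

theorem SatisfiesLSI.marginal {m k : ℕ} {ρ : Evec (m + k) → ℝ} {C : ℝ}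
    (hLSI : SatisfiesLSI ρ C) (hρ0 : ∀ z, 0 ≤ ρ z) (hρ : Measurable ρ)
    (hsect : ∀ x, Integrable fun y : Evec k => ρ (jointAppend x y)) :
    SatisfiesLSI (fun x => ∫ y : Evec k, ρ (jointAppend x y)) C := by
  intro h hh hpos hnorm
  have transfer : ∀ φ : Evec m → ℝ, Measurable φ →
      ∫ w, φ (appendFst m k w) * ρ w = ∫ x, φ x * ∫ y : Evec k, ρ (jointAppend x y) := by
    intro φ hφ
    rw [← integral_jointAppend, Measure.volume_eq_prod]
    simp only [appendFst_jointAppend]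
    exact integral_prod_mul_comp_fst (f := fun z => ρ (jointAppend z.1 z.2)) (fun _ => hρ0 _)
      (hρ.comp continuous_jointAppend.measurable).aestronglyMeasurable hφ.aestronglyMeasurable
      hsect
  have hmeas : Measurable h := hh.continuous.measurable
  have hgrad : ∀ w, ‖gradient (fun v => Real.log (h (appendFst m k v))) w‖ =
      ‖gradient (fun x => Real.log (h x)) (appendFst m k w)‖ := by
    intro w
    have hd : DifferentiableAt ℝ (fun x => Real.log (h x)) (appendFst m k w) :=
      (hh.differentiable (by simp) _).log (hpos _).ne'
    exact (congrArg norm hd.hasGradientAt.comp_appendFst.gradient).trans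
      (norm_jointAppend_zero _)
  have hLSI' := hLSI (fun w => h (appendFst m k w)) (hh.comp (appendFst m k).contDiff)
    (fun _ => hpos _) (by rw [transfer h hmeas]; exact hnorm)
  simp_rw [hgrad] at hLSI'
  rwa [transfer (fun x => h x * Real.log (h x)) (hmeas.mul hmeas.log),
    transfer (fun x => h x * ‖gradient (fun x => Real.log (h x)) x‖ ^ 2)
      (hmeas.mul ((measurable_gradient _).norm.pow_const 2))] at hLSI'

section slice

variable (dx : ℕ) {dy s u : ℕ}

-- `[sliceFrame, sliceNormal]` is `diag(1, [V_⊥, V_s])` with its columns reordered, so the subspace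
-- LSI along `sliceFrame` is the LSI of the slice `{(x, V_s y_s + V_⊥ y_⊥)}` of fixed `y_s`.
def sliceFrame (Vp : Matrix (Fin dy) (Fin u) ℝ) : Matrix (Fin (dx + dy)) (Fin (dx + u)) ℝ :=
  reindex finSumFinEquiv finSumFinEquiv (fromBlocks 1 0 0 Vp)

def sliceNormal (Vs : Matrix (Fin dy) (Fin s) ℝ) : Matrix (Fin (dx + dy)) (Fin s) ℝ :=
  reindex finSumFinEquiv (Equiv.refl _) (fromRows 0 Vs)

variable {dx}

lemma Matrix.IsOrthogonalPair.slice {Vs : Matrix (Fin dy) (Fin s) ℝ}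
    {Vp : Matrix (Fin dy) (Fin u) ℝ} (hV : IsOrthogonalPair Vs Vp) :
    IsOrthogonalPair (sliceFrame dx Vp) (sliceNormal dx Vs) :=
  (hV.swap.fromBlocks_one (m := Fin dx)).reindex _ _ _

lemma sliceFrame_mulVec_add (Vs : Matrix (Fin dy) (Fin s) ℝ) (Vp : Matrix (Fin dy) (Fin u) ℝ)
    (x : Evec dx) (yp : Evec u) (ys : Evec s) :
    WithLp.toLp 2 (sliceFrame dx Vp *ᵥ jointAppend x yp + sliceNormal dx Vs *ᵥ ys) =
      jointAppend x (WithLp.toLp 2 (Vs *ᵥ ys + Vp *ᵥ yp)) := by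
  have hsplit : (jointAppend x yp).ofLp ∘ finSumFinEquiv = Sum.elim x.ofLp yp.ofLp := by
    ext (i | i) <;> simp
  simp only [sliceFrame, sliceNormal, reindex_apply, submatrix_mulVec_equiv, Equiv.symm_symm,
    hsplit]
  ext i
  induction i using Fin.addCases <;> simp [fromBlocks_mulVec, fromRows_mulVec, add_comm]

end slice

theorem SatisfiesSubspaceLSI.condMarginal {dx dy s u : ℕ} {ρ : Evec (dx + dy) → ℝ} {C : ℝ}
    (hLSI : SatisfiesSubspaceLSI ρ C) (hρ0 : ∀ z, 0 ≤ ρ z) (hρ : Continuous ρ)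
    {Vs : Matrix (Fin dy) (Fin s) ℝ} {Vp : Matrix (Fin dy) (Fin u) ℝ}
    (hV : IsOrthogonalPair Vs Vp) (ys : Evec s) {q : Evec dx → ℝ} {Q : ℝ}
    (hq : ∀ x, q x = ∫ yp : Evec u, ρ (jointAppend x (WithLp.toLp 2 (Vs *ᵥ ys + Vp *ᵥ yp))))
    (hq0 : ∀ x, 0 < q x) (hQ : Q = ∫ x, q x) (hQ0 : 0 < Q) :
    SatisfiesLSI (fun x => q x / Q) C := by
  have hsect : ∀ x, Integrable fun yp : Evec u =>
      ρ (jointAppend x (WithLp.toLp 2 (Vs *ᵥ ys + Vp *ᵥ yp))) :=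
    fun x => .of_integral_ne_zero (hq x ▸ (hq0 x).ne')
  have hslice : Continuous fun zt : Evec (dx + u) =>
      ρ (WithLp.toLp 2 (sliceFrame dx Vp *ᵥ zt + sliceNormal dx Vs *ᵥ ys)) := by
    fun_prop
  have hZ : ∫ zt : Evec (dx + u),
      ρ (WithLp.toLp 2 (sliceFrame dx Vp *ᵥ zt + sliceNormal dx Vs *ᵥ ys)) = Q := by
    rw [← integral_jointAppend, hQ]
    simp_rw [sliceFrame_mulVec_add, hq]
    rw [Measure.volume_eq_prod]
    simpa using integral_prod_mul_comp_fst (φ := fun _ : Evec dx => (1 : ℝ))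
      (f := fun z : Evec dx × Evec u =>
        ρ (jointAppend z.1 (WithLp.toLp 2 (Vs *ᵥ ys + Vp *ᵥ z.2))))
      (fun _ => hρ0 _)
      (hρ.comp (continuous_jointAppend.comp (continuous_fst.prodMk (by fun_prop)))
        ).aestronglyMeasurable
      aestronglyMeasurable_const hsect
  obtain ⟨h1, h2, h3, h4⟩ := hV.slice (dx := dx)
  have hcond := hLSI (dx + u) s _ _ h1 h2 h3 h4 ys (hZ ▸ hQ0)
  have hmarg := hcond.marginal (fun _ => div_nonneg (hρ0 _) (hZ ▸ hQ0).le)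
    (hslice.div_const _).measurable fun x => by
      simp_rw [sliceFrame_mulVec_add]; exact (hsect x).div_const _
  simp_rw [sliceFrame_mulVec_add, integral_div, hZ, ← hq] at hmarg
  exact hmarg

theorem SatisfiesLSI.integral_log_ratio_le {n : ℕ} {C : ℝ} {a b w : Evec n → ℝ} {A B : ℝ}
    (hLSI : SatisfiesLSI (fun x => b x / B) C)
    (ha : ContDiff ℝ (⊤ : ℕ∞) a) (hb : ContDiff ℝ (⊤ : ℕ∞) b) (hw : ContDiff ℝ (⊤ : ℕ∞) w)
    (ha0 : ∀ x, 0 < a x) (hb0 : ∀ x, 0 < b x) (hw0 : ∀ x, 0 < w x)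
    (hA : A = ∫ x, a x) (hA0 : 0 < A) (hB0 : 0 < B) :
    ∫ x, Real.log ((a x / w x) * B / ((b x / w x) * A)) * (a x / A) ≤
      (C / 2) * ∫ x, ‖gradient (fun x' => Real.log (a x' / w x')) x -
        gradient (fun x' => Real.log (b x' / w x')) x‖ ^ 2 * (a x / A) := by
  set h := fun x => (a x / w x) * B / ((b x / w x) * A) with h_def
  have hpos : ∀ x, 0 < h x := fun x => by
    have := ha0 x; have := hb0 x; have := hw0 x; positivity
  have hsmooth : ContDiff ℝ (⊤ : ℕ∞) h :=
    ((ha.div hw fun x => (hw0 x).ne').mul contDiff_const).div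
      ((hb.div hw fun x => (hw0 x).ne').mul contDiff_const) fun x => by
        have := hb0 x; have := hw0 x; positivity
  have hdens : ∀ x, h x * (b x / B) = a x / A := fun x => by
    have := hb0 x; have := hw0 x; simp only [h_def]; field_simp
  have hlogRatio : ∀ c : Evec n → ℝ, ContDiff ℝ (⊤ : ℕ∞) c → (∀ x, 0 < c x) →
      ∀ x, HasGradientAt (fun x' => Real.log (c x' / w x'))
        (gradient (fun x' => Real.log (c x' / w x')) x) x := fun c hc hc0 x =>
    (((hc.div hw fun x => (hw0 x).ne').log fun x => (div_pos (hc0 x) (hw0 x)).ne'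
      ).differentiable (by simp) x).hasGradientAt
  have hgrad : ∀ x, gradient (fun x' => Real.log (h x')) x =
      gradient (fun x' => Real.log (a x' / w x')) x -
        gradient (fun x' => Real.log (b x' / w x')) x := by
    intro x
    have hsplit : (fun x' => Real.log (h x')) =
        fun x' => Real.log (a x' / w x') - Real.log (b x' / w x') + Real.log (B / A) := by
      funext x'
      have := ha0 x'; have := hb0 x'; have := hw0 x'
      have hratio : h x' = (a x' / w x') / (b x' / w x') * (B / A) := by
        simp only [h_def]; field_simp
      rw [hratio, Real.log_mul (by positivity) (by positivity),
        Real.log_div (by positivity) (by positivity)]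
    rw [hsplit]
    exact (((hlogRatio a ha ha0 x).sub (hlogRatio b hb hb0 x)).add_const _).gradient
  calc ∫ x, Real.log (h x) * (a x / A)
      = ∫ x, h x * Real.log (h x) * (b x / B) := by
        congr 1; funext x; rw [← hdens]; ring
    _ ≤ (C / 2) * ∫ x, h x * ‖gradient (fun x' => Real.log (h x')) x‖ ^ 2 * (b x / B) :=
        hLSI h hsmooth hpos (by simp_rw [hdens, integral_div, ← hA, div_self hA0.ne'])
    _ = _ := by
        congr 2; funext x; rw [hgrad, ← hdens]; ring

theorem stmt6_general {dx dy s u : ℕ} (Cb : ℝ)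
    (ρ : Evec (dx + dy) → ℝ)
    (hρsmooth : ContDiff ℝ (⊤ : ℕ∞) ρ) (hρpos : ∀ z, 0 < ρ z)
    (hLSI : SatisfiesSubspaceLSI ρ Cb)
    (Vs : Matrix (Fin dy) (Fin s) ℝ) (Vp : Matrix (Fin dy) (Fin u) ℝ)
    (hV1 : Vsᵀ * Vs = 1) (hV2 : Vpᵀ * Vp = 1) (hV3 : Vsᵀ * Vp = 0)
    (hV4 : Vs * Vsᵀ + Vp * Vpᵀ = 1)
    -- marginal densities
    (margX : Evec dx → ℝ)
    (margY : Evec dy → ℝ) (hmargY : ∀ y, margY y = ∫ x : Evec dx, ρ (jointAppend x y))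
    (margXYs : Evec dx → Evec s → ℝ)
    (hmargXYs : ∀ x ys, margXYs x ys =
      ∫ yp : Evec u, ρ (jointAppend x (WithLp.toLp 2 (Vs *ᵥ ys + Vp *ᵥ yp))))
    (margYs : Evec s → ℝ) (hmargYs : ∀ ys, margYs ys = ∫ x : Evec dx, margXYs x ys)
    -- positivity and smoothness of all conditional densities involved
    (hmargXpos : ∀ x, 0 < margX x) (hmargYpos : ∀ y, 0 < margY y)
    (hmargXYspos : ∀ x ys, 0 < margXYs x ys) (hmargYspos : ∀ ys, 0 < margYs ys)
    (hmargXsmooth : ContDiff ℝ (⊤ : ℕ∞) margX)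
    (hmargXYssmooth : ∀ ys, ContDiff ℝ (⊤ : ℕ∞) (fun x => margXYs x ys))
    -- the averaging probability density p on ℝ^{d_y}
    (p : Evec dy → ℝ) (hp0 : ∀ y, 0 ≤ p y)
    -- finiteness of the relevant integrals
    (hint2 : Integrable (fun y : Evec dy =>
      (∫ x : Evec dx,
        Real.log ((ρ (jointAppend x y) / margX x) * margYs (WithLp.toLp 2 (Vsᵀ *ᵥ y)) /
            ((margXYs x (WithLp.toLp 2 (Vsᵀ *ᵥ y)) / margX x) * margY y)) *
          (ρ (jointAppend x y) / margY y)) * p y))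
    (hint4 : Integrable (fun y : Evec dy =>
      (∫ x : Evec dx,
        ‖gradient (fun x' : Evec dx => Real.log (ρ (jointAppend x' y) / margX x')) x -
            gradient (fun x' : Evec dx => Real.log (margXYs x' (WithLp.toLp 2 (Vsᵀ *ᵥ y)) / margX x')) x‖ ^ 2 *
          (ρ (jointAppend x y) / margY y)) * p y)) :
    (∫ y : Evec dy,
        (∫ x : Evec dx,
          Real.log ((ρ (jointAppend x y) / margX x) * margYs (WithLp.toLp 2 (Vsᵀ *ᵥ y)) /
              ((margXYs x (WithLp.toLp 2 (Vsᵀ *ᵥ y)) / margX x) * margY y)) *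
            (ρ (jointAppend x y) / margY y)) * p y)
      ≤ (Cb / 2) * ∫ y : Evec dy,
          (∫ x : Evec dx,
            ‖gradient (fun x' : Evec dx => Real.log (ρ (jointAppend x' y) / margX x')) x -
                gradient (fun x' : Evec dx => Real.log (margXYs x' (WithLp.toLp 2 (Vsᵀ *ᵥ y)) / margX x')) x‖ ^ 2 *
              (ρ (jointAppend x y) / margY y)) * p y := by
  have hV : IsOrthogonalPair Vs Vp := ⟨hV1, hV2, hV3, hV4⟩
  rw [← integral_const_mul]
  refine integral_mono hint2 (hint4.const_mul _) fun y => ?_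
  set ys : Evec s := WithLp.toLp 2 (Vsᵀ *ᵥ y)
  have hcond : SatisfiesLSI (fun x => margXYs x ys / margYs ys) Cb :=
    hLSI.condMarginal (fun _ => (hρpos _).le) hρsmooth.continuous hV ys (hmargXYs · ys)
      (hmargXYspos · ys) (hmargYs ys) (hmargYspos ys)
  have hjoint : ContDiff ℝ (⊤ : ℕ∞) fun x => ρ (jointAppend x y) := by
    simp_rw [jointAppend_eq_finAddEquivProd_symm]
    exact hρsmooth.comp (by fun_prop)
  rw [← mul_assoc]
  exact mul_le_mul_of_nonneg_right (hcond.integral_log_ratio_le hjoint (hmargXYssmooth ys)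
    hmargXsmooth (fun _ => hρpos _) (hmargXYspos · ys) hmargXpos (hmargY y) (hmargYpos y)
    (hmargYspos ys)) (hp0 y)

/-- the log-Sobolev bound on the output-space term: for a joint density `π(x,y)`
satisfying the subspace LSI with constant `C̄` and any probability density `p` on `ℝ^{d_y}`,
`∬ log(π(y|x) π(y_s) / (π(y_s|x) π(y))) π(x|y) p(y) dx dy
  ≤ (C̄/2) ∬ ‖∇_x log π(y|x) − ∇_x log π(y_s|x)‖² π(x|y) p(y) dx dy`. -/
theorem stmt6 {dx dy s u : ℕ} (Cb : ℝ)
    (ρ : Evec (dx + dy) → ℝ)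
    (hρsmooth : ContDiff ℝ (⊤ : ℕ∞) ρ) (hρpos : ∀ z, 0 < ρ z)
    (hρint : (∫ z, ρ z) = 1)
    (hLSI : SatisfiesSubspaceLSI ρ Cb)
    (Vs : Matrix (Fin dy) (Fin s) ℝ) (Vp : Matrix (Fin dy) (Fin u) ℝ)
    (hV1 : Vsᵀ * Vs = 1) (hV2 : Vpᵀ * Vp = 1) (hV3 : Vsᵀ * Vp = 0)
    (hV4 : Vs * Vsᵀ + Vp * Vpᵀ = 1)
    -- marginal densities
    (margX : Evec dx → ℝ) (hmargX : ∀ x, margX x = ∫ y : Evec dy, ρ (jointAppend x y))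
    (margY : Evec dy → ℝ) (hmargY : ∀ y, margY y = ∫ x : Evec dx, ρ (jointAppend x y))
    (margXYs : Evec dx → Evec s → ℝ)
    (hmargXYs : ∀ x ys, margXYs x ys =
      ∫ yp : Evec u, ρ (jointAppend x (WithLp.toLp 2 (Vs *ᵥ ys + Vp *ᵥ yp))))
    (margYs : Evec s → ℝ) (hmargYs : ∀ ys, margYs ys = ∫ x : Evec dx, margXYs x ys)
    -- positivity and smoothness of all conditional densities involved
    (hmargXpos : ∀ x, 0 < margX x) (hmargYpos : ∀ y, 0 < margY y)
    (hmargXYspos : ∀ x ys, 0 < margXYs x ys) (hmargYspos : ∀ ys, 0 < margYs ys)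
    (hmargXsmooth : ContDiff ℝ (⊤ : ℕ∞) margX)
    (hmargXYssmooth : ∀ ys, ContDiff ℝ (⊤ : ℕ∞) (fun x => margXYs x ys))
    -- smoothness (and positivity) of x ↦ π(x, y_⊥ | y_s)/π(x | y_s) for fixed y
    (hratio : ∀ y : Evec dy,
      ContDiff ℝ (⊤ : ℕ∞) (fun x : Evec dx => ρ (jointAppend x y) / margXYs x (WithLp.toLp 2 (Vsᵀ *ᵥ y))) ∧
      ∀ x : Evec dx, 0 < ρ (jointAppend x y) / margXYs x (WithLp.toLp 2 (Vsᵀ *ᵥ y)))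
    -- the averaging probability density p on ℝ^{d_y}
    (p : Evec dy → ℝ) (hp0 : ∀ y, 0 ≤ p y) (hp1 : (∫ y, p y) = 1)
    -- finiteness of the relevant integrals
    (hint1 : ∀ y : Evec dy, Integrable (fun x : Evec dx =>
      Real.log ((ρ (jointAppend x y) / margX x) * margYs (WithLp.toLp 2 (Vsᵀ *ᵥ y)) /
          ((margXYs x (WithLp.toLp 2 (Vsᵀ *ᵥ y)) / margX x) * margY y)) *
        (ρ (jointAppend x y) / margY y)))
    (hint2 : Integrable (fun y : Evec dy =>
      (∫ x : Evec dx,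
        Real.log ((ρ (jointAppend x y) / margX x) * margYs (WithLp.toLp 2 (Vsᵀ *ᵥ y)) /
            ((margXYs x (WithLp.toLp 2 (Vsᵀ *ᵥ y)) / margX x) * margY y)) *
          (ρ (jointAppend x y) / margY y)) * p y))
    (hint3 : ∀ y : Evec dy, Integrable (fun x : Evec dx =>
      ‖gradient (fun x' : Evec dx => Real.log (ρ (jointAppend x' y) / margX x')) x -
          gradient (fun x' : Evec dx => Real.log (margXYs x' (WithLp.toLp 2 (Vsᵀ *ᵥ y)) / margX x')) x‖ ^ 2 *
        (ρ (jointAppend x y) / margY y)))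
    (hint4 : Integrable (fun y : Evec dy =>
      (∫ x : Evec dx,
        ‖gradient (fun x' : Evec dx => Real.log (ρ (jointAppend x' y) / margX x')) x -
            gradient (fun x' : Evec dx => Real.log (margXYs x' (WithLp.toLp 2 (Vsᵀ *ᵥ y)) / margX x')) x‖ ^ 2 *
          (ρ (jointAppend x y) / margY y)) * p y)) :
    (∫ y : Evec dy,
        (∫ x : Evec dx,
          Real.log ((ρ (jointAppend x y) / margX x) * margYs (WithLp.toLp 2 (Vsᵀ *ᵥ y)) /
              ((margXYs x (WithLp.toLp 2 (Vsᵀ *ᵥ y)) / margX x) * margY y)) *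
            (ρ (jointAppend x y) / margY y)) * p y)
      ≤ (Cb / 2) * ∫ y : Evec dy,
          (∫ x : Evec dx,
            ‖gradient (fun x' : Evec dx => Real.log (ρ (jointAppend x' y) / margX x')) x -
                gradient (fun x' : Evec dx => Real.log (margXYs x' (WithLp.toLp 2 (Vsᵀ *ᵥ y)) / margX x')) x‖ ^ 2 *
              (ρ (jointAppend x y) / margY y)) * p y :=
  stmt6_general Cb ρ hρsmooth hρpos hLSI Vs Vp hV1 hV2 hV3 hV4 margX margY hmargY margXYs hmargXYs
    margYs hmargYs hmargXpos hmargYpos hmargXYspos hmargYspos hmargXsmooth hmargXYssmooth p hp0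
    hint2 hint4
end
end

section
/- Let Γ ∈ ℝ^{d×d} be symmetric positive definite, let V_s ∈ ℝ^{d×s} be such that A_s := V_sᵀΓV_s is invertible, let H ∈ ℝ^{d×s} be arbitrary, and let C ∈ ℝ^{d×d} be symmetric. Define D_{V_s}P_s[H] := −H A_s⁻¹ V_sᵀ − V_s A_s⁻¹ Hᵀ + V_s A_s⁻¹ (HᵀΓV_s + V_sᵀΓH) A_s⁻¹ V_sᵀ and P_s := Γ⁻¹ − V_s A_s⁻¹ V_sᵀ. Then Tr[ C · D_{V_s}P_s[H] ] = −2 Tr[ (Γ P_s C V_s A_s⁻¹)ᵀ H ]. -/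
/-!
Writing `M = A_s⁻¹` and `P_s Γ = 1 - V_s M V_sᵀ Γ`, the derivative collapses to
`D_{V_s}P_s[H] = -(Q + Qᵀ)` with `Q = P_s Γ H M V_sᵀ`, because `Γ` and `M` are symmetric.
For symmetric `C` the two halves have the same trace against `C`, and the cyclicity of the trace
turns `Tr[C Q]` into `Tr[(Γ P_s C V_s M)ᵀ H]`.
-/

open Matrix

namespace Matrix

variable {m n R : Type*} [Fintype m] [Fintype n] [CommRing R]

theorem trace_mul_add_transpose {C : Matrix n n R} (hC : Cᵀ = C) (Q : Matrix n n R) :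
    trace (C * (Q + Qᵀ)) = 2 * trace (C * Q) := by
  have h : trace (C * Qᵀ) = trace (C * Q) := by
    rw [← trace_transpose, transpose_mul, transpose_transpose, hC, trace_mul_comm]
  rw [Matrix.mul_add, trace_add, h, two_mul]

theorem trace_transpose_mul_eq_trace_mul_mul_transpose {G P C : Matrix n n R}
    {M : Matrix m m R} (hG : Gᵀ = G) (hP : Pᵀ = P) (hC : Cᵀ = C) (hM : Mᵀ = M)
    (V H : Matrix n m R) :
    trace ((G * P * C * V * M)ᵀ * H) = trace (C * (P * G * H * M * Vᵀ)) := by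
  calc trace ((G * P * C * V * M)ᵀ * H) = trace (M * Vᵀ * (C * P * G * H)) := by
        simp only [transpose_mul, hG, hP, hC, hM, Matrix.mul_assoc]
    _ = trace (C * P * G * H * (M * Vᵀ)) := trace_mul_comm _ _
    _ = trace (C * (P * G * H * M * Vᵀ)) := by simp only [Matrix.mul_assoc]

variable [DecidableEq m]

theorem transpose_inv_transpose_mul_mul_self {Γ : Matrix n n R} (hΓ : Γᵀ = Γ)
    (V : Matrix n m R) : (Vᵀ * Γ * V)⁻¹ᵀ = (Vᵀ * Γ * V)⁻¹ := by
  rw [transpose_nonsing_inv, transpose_mul, transpose_mul, transpose_transpose, hΓ,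
    Matrix.mul_assoc]

variable [DecidableEq n]

noncomputable def gammaProj (Γ : Matrix n n R) (V : Matrix n m R) : Matrix n n R :=
  Γ⁻¹ - V * (Vᵀ * Γ * V)⁻¹ * Vᵀ

/-- `D_{V_s}P_s[H]`, the derivative of `V ↦ gammaProj Γ V` in the direction `H`. -/
noncomputable def gammaProjDeriv (Γ : Matrix n n R) (V H : Matrix n m R) : Matrix n n R :=
  -(H * (Vᵀ * Γ * V)⁻¹ * Vᵀ) - V * (Vᵀ * Γ * V)⁻¹ * Hᵀ
    + V * (Vᵀ * Γ * V)⁻¹ * (Hᵀ * Γ * V + Vᵀ * Γ * H) * (Vᵀ * Γ * V)⁻¹ * Vᵀ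

theorem gammaProj_mul_self {Γ : Matrix n n R} (hΓ : IsUnit Γ.det) (V : Matrix n m R) :
    gammaProj Γ V * Γ = 1 - V * (Vᵀ * Γ * V)⁻¹ * Vᵀ * Γ := by
  rw [gammaProj, Matrix.sub_mul, nonsing_inv_mul Γ hΓ]

theorem transpose_gammaProj {Γ : Matrix n n R} (hΓ : Γᵀ = Γ) (V : Matrix n m R) :
    (gammaProj Γ V)ᵀ = gammaProj Γ V := by
  rw [gammaProj, transpose_sub, transpose_nonsing_inv, hΓ, transpose_mul, transpose_mul,
    transpose_transpose, transpose_inv_transpose_mul_mul_self hΓ]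
  simp only [Matrix.mul_assoc]

theorem gammaProjDeriv_eq_neg_add_transpose {Γ : Matrix n n R} (hΓ : Γᵀ = Γ)
    (hΓu : IsUnit Γ.det) (V H : Matrix n m R) :
    gammaProjDeriv Γ V H =
      -(gammaProj Γ V * Γ * H * (Vᵀ * Γ * V)⁻¹ * Vᵀ
        + (gammaProj Γ V * Γ * H * (Vᵀ * Γ * V)⁻¹ * Vᵀ)ᵀ) := by
  have hM := transpose_inv_transpose_mul_mul_self hΓ V
  rw [gammaProjDeriv, gammaProj_mul_self hΓu]
  generalize (Vᵀ * Γ * V)⁻¹ = M at hM ⊢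
  simp only [Matrix.sub_mul, Matrix.one_mul, Matrix.mul_add, Matrix.add_mul, transpose_sub,
    transpose_mul, transpose_transpose, hΓ, hM, Matrix.mul_assoc]
  abel

end Matrix

theorem stmt12_general {d s : ℕ} (Γ : Matrix (Fin d) (Fin d) ℝ) (hΓ : Γ.PosDef)
    (Vs : Matrix (Fin d) (Fin s) ℝ)
    (H : Matrix (Fin d) (Fin s) ℝ)
    (C : Matrix (Fin d) (Fin d) ℝ) (hC : Cᵀ = C) :
    Matrix.trace (C *
      (-(H * (Vsᵀ * Γ * Vs)⁻¹ * Vsᵀ) - Vs * (Vsᵀ * Γ * Vs)⁻¹ * Hᵀ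
        + Vs * (Vsᵀ * Γ * Vs)⁻¹ * (Hᵀ * Γ * Vs + Vsᵀ * Γ * H) * (Vsᵀ * Γ * Vs)⁻¹ * Vsᵀ))
    = -2 * Matrix.trace
        ((Γ * (Γ⁻¹ - Vs * (Vsᵀ * Γ * Vs)⁻¹ * Vsᵀ) * C * Vs * (Vsᵀ * Γ * Vs)⁻¹)ᵀ * H) := by
  have hΓt : Γᵀ = Γ := hΓ.isHermitian
  have hΓu : IsUnit Γ.det := isUnit_iff_ne_zero.mpr hΓ.det_pos.ne'
  change trace (C * gammaProjDeriv Γ Vs H)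
    = -2 * trace ((Γ * gammaProj Γ Vs * C * Vs * (Vsᵀ * Γ * Vs)⁻¹)ᵀ * H)
  rw [gammaProjDeriv_eq_neg_add_transpose hΓt hΓu, Matrix.mul_neg, trace_neg,
    trace_mul_add_transpose hC, trace_transpose_mul_eq_trace_mul_mul_transpose hΓt
      (transpose_gammaProj hΓt Vs) hC (transpose_inv_transpose_mul_mul_self hΓt Vs)]
  simp only [Matrix.mul_assoc]
  ring

/-- the trace identity
`Tr[C · D_{V_s}P_s[H]] = −2 Tr[(Γ P_s C V_s A_s⁻¹)ᵀ H]` for symmetric `C`, where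
`A_s = V_sᵀΓV_s`, `P_s = Γ⁻¹ − V_s A_s⁻¹ V_sᵀ` and
`D_{V_s}P_s[H] = −H A_s⁻¹ V_sᵀ − V_s A_s⁻¹ Hᵀ + V_s A_s⁻¹ (HᵀΓV_s + V_sᵀΓH) A_s⁻¹ V_sᵀ`. -/
theorem stmt12 {d s : ℕ} (Γ : Matrix (Fin d) (Fin d) ℝ) (hΓ : Γ.PosDef)
    (Vs : Matrix (Fin d) (Fin s) ℝ) (hAs : IsUnit (Vsᵀ * Γ * Vs).det)
    (H : Matrix (Fin d) (Fin s) ℝ)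
    (C : Matrix (Fin d) (Fin d) ℝ) (hC : Cᵀ = C) :
    Matrix.trace (C *
      (-(H * (Vsᵀ * Γ * Vs)⁻¹ * Vsᵀ) - Vs * (Vsᵀ * Γ * Vs)⁻¹ * Hᵀ
        + Vs * (Vsᵀ * Γ * Vs)⁻¹ * (Hᵀ * Γ * Vs + Vsᵀ * Γ * H) * (Vsᵀ * Γ * Vs)⁻¹ * Vsᵀ))
    = -2 * Matrix.trace
        ((Γ * (Γ⁻¹ - Vs * (Vsᵀ * Γ * Vs)⁻¹ * Vsᵀ) * C * Vs * (Vsᵀ * Γ * Vs)⁻¹)ᵀ * H) :=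
  stmt12_general Γ hΓ Vs H C hC
end
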